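/- For quantum states ρ, σ on a d-dimensional Hilbert space with μσ ≤ ρ ≤ λσ (0 < μ < λ), and any grid μ = t₁ ≤ … ≤ t_r = λ with maximal step size δ = max_k (t_{k+1} − t_k), the discretisation error of the lower-bound approximation to ∫_μ^λ (1/s)·tr⁺(sσ − ρ) ds is at most 2δ²d/μ; in particular the gap between the grid-based upper and lower bounds on D(ρ‖σ) is at most 2δ²d/μ. -/

import Mathlib

open scoped ComplexOrder

/-- A quantum state: positive semidefinite with unit trace. -/
def IsState {d : ℕ} (ρ : Matrix (Fin d) (Fin d) ℂ) : Prop :=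
  ρ.PosSemidef ∧ ρ.trace = 1

/-- `tr⁺(A) = sup { tr(PA) : 0 ≤ P ≤ 1 }`. -/
noncomputable def trPlus {d : ℕ} (A : Matrix (Fin d) (Fin d) ℂ) : ℝ :=
  sSup {x : ℝ | ∃ P : Matrix (Fin d) (Fin d) ℂ,
    P.PosSemidef ∧ (1 - P).PosSemidef ∧ x = ((P * A).trace).re}

/-!
Write `f s = tr⁺(sσ - ρ)`. A maximiser `P_τ` for `tr⁺(τσ - ρ)` (the Loewner interval `[0, 1]`
is compact) gives the supporting line `s ↦ Re tr(P_τ (sσ - ρ))` of `f` at `τ`, whose slope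
`g τ = Re tr(P_τ σ)` lies in `[0, 1]`. Hence `f` lies below its secants, and on a cell `[a, b]`
the lower bound `tr⁺(log(a/b) ρ + (b - a) σ)` dominates `∫ s⁻¹ (tangent line of f at a)`. The
gap on the cell is then at most `∫ s⁻¹ (m - g a)(s - a) ≤ (m - g a)(b - a)² / (2μ)`, where the
secant slope `m` lies in `[g a, g b]`; these slope increments telescope to
`g λ - g μ ≤ 1`, so both errors are at most `δ² / (2μ)`.
-/

open Set MeasureTheory intervalIntegral

theorem Fin.sum_succ_sub_castSucc {M : Type*} [AddCommGroup M] :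
    ∀ {n : ℕ} (f : Fin (n + 1) → M),
      ∑ i : Fin n, (f i.succ - f i.castSucc) = f (Fin.last n) - f 0
  | 0, f => by simp
  | n + 1, f => by
    rw [Fin.sum_univ_castSucc]
    simp only [Fin.succ_castSucc]
    rw [Fin.sum_succ_sub_castSucc (fun i => f i.castSucc)]
    simp only [Fin.succ_last, Fin.castSucc_zero]
    abel

theorem intervalIntegral.sum_integral_adjacent_intervals_fin {g : ℝ → ℝ} {n : ℕ}
    {t : Fin (n + 1) → ℝ} (hg : ∀ i, IntervalIntegrable g volume (t 0) (t i)) :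
    ∑ k : Fin n, ∫ s in t k.castSucc..t k.succ, g s = ∫ s in t 0..t (Fin.last n), g s := by
  have := Fin.sum_succ_sub_castSucc fun i => ∫ s in t 0..t i, g s
  simpa only [integral_interval_sub_left (hg _) (hg _), integral_same, sub_zero] using this

theorem intervalIntegrable_inv_mul {h : ℝ → ℝ} {a b : ℝ} (ha : 0 < a) (hb : 0 < b)
    (hh : ContinuousOn h (uIcc a b)) : IntervalIntegrable (fun s => s⁻¹ * h s) volume a b := by
  refine ContinuousOn.intervalIntegrable (ContinuousOn.mul (continuousOn_inv₀.mono ?_) hh)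
  intro s hs
  exact (lt_min ha hb |>.trans_le hs.1).ne'

theorem integral_inv_mul_sub_le {μ a b c : ℝ} (hμ : 0 < μ) (hμa : μ ≤ a) (hab : a ≤ b)
    (hc : 0 ≤ c) : ∫ s in a..b, s⁻¹ * (c * (s - a)) ≤ c * (b - a) ^ 2 / (2 * μ) := by
  have ha : 0 < a := hμ.trans_le hμa
  calc ∫ s in a..b, s⁻¹ * (c * (s - a)) ≤ ∫ s in a..b, μ⁻¹ * (c * (s - a)) := by
        refine integral_mono_on hab
          (intervalIntegrable_inv_mul ha (ha.trans_le hab) (by fun_prop))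
          ((by fun_prop : Continuous _).intervalIntegrable _ _)
          fun s hs => ?_
        exact mul_le_mul_of_nonneg_right (inv_anti₀ hμ (hμa.trans hs.1))
          (mul_nonneg hc (sub_nonneg.2 hs.1))
    _ = c * (b - a) ^ 2 / (2 * μ) := by
        simp only [intervalIntegral.integral_const_mul,
          intervalIntegral.integral_comp_sub_right fun s => s, integral_id, sub_self]
        ring

section SupportingLines

variable {f g : ℝ → ℝ}

theorem slope_mem_Icc_of_supporting (hf : ∀ τ s, f τ + g τ * (s - τ) ≤ f s) {a b : ℝ}
    (hab : a < b) : (f b - f a) / (b - a) ∈ Icc (g a) (g b) := by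
  have hba : 0 < b - a := sub_pos.2 hab
  constructor
  · rw [le_div_iff₀ hba]; linarith [hf a b]
  · rw [div_le_iff₀ hba]; linarith [hf b a]

theorem le_secant_of_supporting (hf : ∀ τ s, f τ + g τ * (s - τ) ≤ f s) {a b s : ℝ}
    (hab : a < b) (has : a ≤ s) (hsb : s ≤ b) :
    f s ≤ (f b - f a) / (b - a) * (s - a) + f a := by
  have hba : 0 < b - a := sub_pos.2 hab
  rw [div_mul_eq_mul_div, div_add' _ _ _ hba.ne', le_div_iff₀ hba]
  nlinarith [mul_le_mul_of_nonneg_left (hf s a) (sub_nonneg.2 hsb),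
    mul_le_mul_of_nonneg_left (hf s b) (sub_nonneg.2 has)]

theorem lipschitzWith_one_of_supporting (hf : ∀ τ s, f τ + g τ * (s - τ) ≤ f s)
    (hg : ∀ τ, g τ ∈ Icc (0 : ℝ) 1) : LipschitzWith 1 f :=
  LipschitzWith.of_le_add fun x y => by
    rw [Real.dist_eq]
    nlinarith [hf x y, (hg x).1, (hg x).2, le_abs_self (x - y), abs_nonneg (x - y)]

theorem integral_inv_mul_le_secant (hf : ∀ τ s, f τ + g τ * (s - τ) ≤ f s)
    (hcont : Continuous f) {a b : ℝ} (ha : 0 < a) (hab : a ≤ b) :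
    ∫ s in a..b, s⁻¹ * f s ≤ ∫ s in a..b, s⁻¹ * ((f b - f a) / (b - a) * (s - a) + f a) := by
  rcases hab.eq_or_lt with rfl | hab
  · simp
  have hb := ha.trans hab
  refine integral_mono_on hab.le (intervalIntegrable_inv_mul ha hb hcont.continuousOn)
    (intervalIntegrable_inv_mul ha hb (by fun_prop)) fun s hs => ?_
  exact mul_le_mul_of_nonneg_left (le_secant_of_supporting hf hab hs.1 hs.2)
    (inv_nonneg.2 (ha.le.trans hs.1))

theorem integral_inv_mul_secant_sub_tangent_le (hf : ∀ τ s, f τ + g τ * (s - τ) ≤ f s)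
    {μ a b δ : ℝ} (hμ : 0 < μ) (hμa : μ ≤ a) (hab : a ≤ b) (hδ : b - a ≤ δ) :
    (∫ s in a..b, s⁻¹ * ((f b - f a) / (b - a) * (s - a) + f a))
      - ∫ s in a..b, s⁻¹ * (f a + g a * (s - a)) ≤ (g b - g a) * δ ^ 2 / (2 * μ) := by
  rcases hab.eq_or_lt with rfl | hab
  · simp
  have ha : 0 < a := hμ.trans_le hμa
  have hb := ha.trans hab
  obtain ⟨hma, hmb⟩ := slope_mem_Icc_of_supporting hf hab
  set m := (f b - f a) / (b - a)
  rw [← integral_sub (intervalIntegrable_inv_mul ha hb (by fun_prop))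
    (intervalIntegrable_inv_mul ha hb (by fun_prop))]
  calc _ = ∫ s in a..b, s⁻¹ * ((m - g a) * (s - a)) := by congr 1; ext s; ring
    _ ≤ (m - g a) * (b - a) ^ 2 / (2 * μ) :=
        integral_inv_mul_sub_le hμ hμa hab.le (sub_nonneg.2 hma)
    _ ≤ (g b - g a) * δ ^ 2 / (2 * μ) := by
        have hδ2 : (b - a) ^ 2 ≤ δ ^ 2 := pow_le_pow_left₀ (sub_nonneg.2 hab.le) hδ 2
        gcongr
        linarith

variable {n : ℕ} {t : Fin (n + 1) → ℝ}

theorem integral_inv_mul_le_sum_secant (hf : ∀ τ s, f τ + g τ * (s - τ) ≤ f s)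
    (hcont : Continuous f) (ht0 : 0 < t 0) (hmono : Monotone t) :
    ∫ s in t 0..t (Fin.last n), s⁻¹ * f s
      ≤ ∑ k : Fin n, ∫ s in t k.castSucc..t k.succ, s⁻¹ *
          ((f (t k.succ) - f (t k.castSucc)) / (t k.succ - t k.castSucc) * (s - t k.castSucc)
            + f (t k.castSucc)) := by
  have htpos : ∀ i, 0 < t i := fun i => ht0.trans_le (hmono (Fin.zero_le i))
  rw [← sum_integral_adjacent_intervals_fin fun i =>
    intervalIntegrable_inv_mul ht0 (htpos i) hcont.continuousOn]
  exact Finset.sum_le_sum fun k _ =>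
    integral_inv_mul_le_secant hf hcont (htpos _) (hmono (Fin.castSucc_le_succ k))

theorem sum_integral_secant_sub_tangent_le (hf : ∀ τ s, f τ + g τ * (s - τ) ≤ f s) {δ : ℝ}
    (ht0 : 0 < t 0) (hmono : Monotone t) (hδ : ∀ k : Fin n, t k.succ - t k.castSucc ≤ δ) :
    ∑ k : Fin n, ((∫ s in t k.castSucc..t k.succ, s⁻¹ *
          ((f (t k.succ) - f (t k.castSucc)) / (t k.succ - t k.castSucc) * (s - t k.castSucc)
            + f (t k.castSucc)))
        - ∫ s in t k.castSucc..t k.succ, s⁻¹ *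
          (f (t k.castSucc) + g (t k.castSucc) * (s - t k.castSucc)))
      ≤ (g (t (Fin.last n)) - g (t 0)) * δ ^ 2 / (2 * t 0) := by
  calc _ ≤ ∑ k : Fin n, (g (t k.succ) - g (t k.castSucc)) * δ ^ 2 / (2 * t 0) :=
        Finset.sum_le_sum fun k _ => integral_inv_mul_secant_sub_tangent_le hf ht0
          (hmono (Fin.zero_le _)) (hmono (Fin.castSucc_le_succ k)) (hδ k)
    _ = _ := by
        rw [← Finset.sum_div, ← Finset.sum_mul, Fin.sum_succ_sub_castSucc fun i => g (t i)]

end SupportingLines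

section TracePositivePart

-- With the operator norm, square complex matrices form a C⋆-algebra whose order is the Loewner
-- order; this gives compactness of `Icc 0 1` and square roots `S = star B * B` of `0 ≤ S`.
open scoped MatrixOrder Matrix.Norms.L2Operator

variable {ι : Type*} [Fintype ι] [DecidableEq ι] {d : ℕ}

theorem trPlus_eq_sSup_image (A : Matrix (Fin d) (Fin d) ℂ) :
    trPlus A = sSup ((fun P => ((P * A).trace).re) '' Icc 0 1) := by
  rw [trPlus]
  congr 1
  ext x
  simp only [mem_ofPred_eq, mem_image, mem_Icc, Matrix.le_iff, sub_zero]
  exact ⟨fun ⟨P, h0, h1, hx⟩ => ⟨P, ⟨h0, h1⟩, hx.symm⟩,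
    fun ⟨P, ⟨h0, h1⟩, hx⟩ => ⟨P, h0, h1, hx.symm⟩⟩

theorem Matrix.isCompact_Icc_zero_one : IsCompact (Icc (0 : Matrix ι ι ℂ) 1) := by
  refine Metric.isCompact_of_isClosed_isBounded isClosed_Icc
    ((Metric.isBounded_iff_subset_closedBall 0).2 ⟨‖(1 : Matrix ι ι ℂ)‖, fun P hP => ?_⟩)
  rw [mem_closedBall_zero_iff]
  exact CStarAlgebra.norm_le_norm_of_nonneg_of_le hP.1 hP.2

theorem re_trace_mul_le_trPlus (A : Matrix (Fin d) (Fin d) ℂ) {P : Matrix (Fin d) (Fin d) ℂ}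
    (hP : P ∈ Icc 0 1) : ((P * A).trace).re ≤ trPlus A := by
  rw [trPlus_eq_sSup_image]
  exact le_csSup ((Matrix.isCompact_Icc_zero_one.image (by fun_prop)).bddAbove) ⟨P, hP, rfl⟩

theorem exists_re_trace_mul_eq_trPlus (A : Matrix (Fin d) (Fin d) ℂ) :
    ∃ P ∈ Icc (0 : Matrix (Fin d) (Fin d) ℂ) 1, ((P * A).trace).re = trPlus A := by
  rw [trPlus_eq_sSup_image]
  exact (Matrix.isCompact_Icc_zero_one.image (by fun_prop)).sSup_mem
    ⟨_, 0, left_mem_Icc.2 zero_le_one, rfl⟩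

theorem Matrix.re_trace_mul_nonneg {P S : Matrix ι ι ℂ} (hP : 0 ≤ P) (hS : 0 ≤ S) :
    0 ≤ ((P * S).trace).re := by
  obtain ⟨B, rfl⟩ := CStarAlgebra.nonneg_iff_eq_star_mul_self.mp hS
  rw [← mul_assoc, trace_mul_cycle]
  have hBPB := (nonneg_iff_posSemidef.mp hP).mul_mul_conjTranspose_same B
  exact (Complex.nonneg_iff.mp hBPB.trace_nonneg).1

theorem Matrix.re_trace_mul_mem_Icc {P S : Matrix ι ι ℂ} (hP : P ∈ Icc 0 1) (hS : 0 ≤ S) :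
    ((P * S).trace).re ∈ Icc 0 (S.trace).re := by
  refine ⟨re_trace_mul_nonneg hP.1 hS, ?_⟩
  have := re_trace_mul_nonneg (sub_nonneg.2 hP.2) hS
  rwa [sub_mul, one_mul, trace_sub, Complex.sub_re, sub_nonneg] at this

variable (ρ σ : Matrix (Fin d) (Fin d) ℂ)

theorem re_trace_mul_smul_sub (P : Matrix (Fin d) (Fin d) ℂ) (τ s : ℝ) :
    ((P * (s • σ - ρ)).trace).re
      = ((P * (τ • σ - ρ)).trace).re + ((P * σ).trace).re * (s - τ) := by
  simp only [Matrix.mul_sub, Matrix.mul_smul, Matrix.trace_sub, Matrix.trace_smul, Complex.sub_re,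
    Complex.real_smul, Complex.re_ofReal_mul]
  ring

theorem integral_inv_mul_re_trace_smul_sub (P : Matrix (Fin d) (Fin d) ℂ) {a b : ℝ}
    (ha : 0 < a) (hb : 0 < b) :
    ∫ s in a..b, s⁻¹ * ((P * (s • σ - ρ)).trace).re
      = ((P * (Real.log (a / b) • ρ + (b - a) • σ)).trace).re := by
  have hline : EqOn (fun s => s⁻¹ * ((P * (s • σ - ρ)).trace).re)
      (fun s => ((P * σ).trace).re - s⁻¹ * ((P * ρ).trace).re) (uIcc a b) := fun s hs => by
    have : s ≠ 0 := (lt_min ha hb |>.trans_le hs.1).ne'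
    simp only [re_trace_mul_smul_sub ρ σ P 0 s, zero_smul, zero_sub, Matrix.mul_neg,
      Matrix.trace_neg, Complex.neg_re]
    field_simp
    ring
  rw [integral_congr hline, intervalIntegral.integral_sub intervalIntegrable_const
    (intervalIntegrable_inv_mul ha hb continuousOn_const), intervalIntegral.integral_const,
    intervalIntegral.integral_mul_const, integral_inv_of_pos ha hb, Real.log_div ha.ne' hb.ne',
    Real.log_div hb.ne' ha.ne']
  simp only [Matrix.mul_add, Matrix.mul_smul, Matrix.trace_add, Matrix.trace_smul, Complex.add_re,
    Complex.real_smul, Complex.re_ofReal_mul, smul_eq_mul]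
  ring

theorem exists_supporting_slope_trPlus_smul_sub (hσ : IsState σ) :
    ∃ g : ℝ → ℝ, (∀ τ, g τ ∈ Icc 0 1)
      ∧ (∀ τ s, trPlus (τ • σ - ρ) + g τ * (s - τ) ≤ trPlus (s • σ - ρ))
      ∧ ∀ a b, 0 < a → 0 < b →
        ∫ s in a..b, s⁻¹ * (trPlus (a • σ - ρ) + g a * (s - a))
          ≤ trPlus (Real.log (a / b) • ρ + (b - a) • σ) := by
  choose P hP hPmax using fun τ : ℝ => exists_re_trace_mul_eq_trPlus (τ • σ - ρ)
  have hline : ∀ τ s, trPlus (τ • σ - ρ) + ((P τ * σ).trace).re * (s - τ)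
      = ((P τ * (s • σ - ρ)).trace).re := fun τ s => by
    rw [re_trace_mul_smul_sub ρ σ _ τ, hPmax]
  refine ⟨fun τ => ((P τ * σ).trace).re, fun τ => ?_, fun τ s => ?_, fun a b ha hb => ?_⟩
  · simpa only [hσ.2, Complex.one_re] using Matrix.re_trace_mul_mem_Icc (hP τ) hσ.1.nonneg
  · rw [hline]
    exact re_trace_mul_le_trPlus _ (hP τ)
  · simp only [hline, integral_inv_mul_re_trace_smul_sub ρ σ _ ha hb]
    exact re_trace_mul_le_trPlus _ (hP a)

end TracePositivePart

theorem discretisation_gap_general {d n : ℕ} (ρ σ : Matrix (Fin d) (Fin d) ℂ)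
    (hσ : IsState σ) (μ lam δ : ℝ) (hμ : 0 < μ)
    (t : Fin (n + 1) → ℝ) (hmono : Monotone t)
    (h0 : t 0 = μ) (hlast : t (Fin.last n) = lam)
    (hδ : ∀ k : Fin n, t k.succ - t k.castSucc ≤ δ) :
    (∫ s in μ..lam, s⁻¹ * trPlus (s • σ - ρ))
        - (∑ k : Fin n, trPlus (Real.log (t k.castSucc / t k.succ) • ρ
            + (t k.succ - t k.castSucc) • σ))
      ≤ 2 * δ ^ 2 * d / μ
    ∧ (∑ k : Fin n, ∫ s in (t k.castSucc)..(t k.succ), s⁻¹ *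
          (((trPlus (t k.succ • σ - ρ) - trPlus (t k.castSucc • σ - ρ))
              / (t k.succ - t k.castSucc)) * (s - t k.castSucc)
            + trPlus (t k.castSucc • σ - ρ)))
        - (∑ k : Fin n, trPlus (Real.log (t k.castSucc / t k.succ) • ρ
            + (t k.succ - t k.castSucc) • σ))
      ≤ 2 * δ ^ 2 * d / μ := by
  obtain ⟨g, hg, hsupp, htangent⟩ := exists_supporting_slope_trPlus_smul_sub ρ σ hσ
  have hd : (1 : ℝ) ≤ d := by
    rcases Nat.eq_zero_or_pos d with rfl | hd
    · simp [IsState, Matrix.trace] at hσ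
    · exact_mod_cast hd
  have ht0 : 0 < t 0 := h0 ▸ hμ
  have htpos : ∀ i, 0 < t i := fun i => ht0.trans_le (hmono (Fin.zero_le i))
  have hsplit := integral_inv_mul_le_sum_secant hsupp
    (lipschitzWith_one_of_supporting hsupp hg).continuous ht0 hmono
  rw [h0, hlast] at hsplit
  have hlower := Finset.sum_le_sum (s := .univ) fun (k : Fin n) _ =>
    htangent _ _ (htpos k.castSucc) (htpos k.succ)
  have hgap := sum_integral_secant_sub_tangent_le hsupp ht0 hmono hδ
  rw [Finset.sum_sub_distrib] at hgap
  have hslopes : (g (t (Fin.last n)) - g (t 0)) * δ ^ 2 / (2 * t 0) ≤ 2 * δ ^ 2 * d / μ := by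
    have hg1 : g (t (Fin.last n)) - g μ ≤ 1 := by linarith [(hg (t (Fin.last n))).2, (hg μ).1]
    rw [h0, div_le_div_iff₀ (by positivity) hμ]
    nlinarith [mul_le_mul_of_nonneg_right hg1 (by positivity : 0 ≤ δ ^ 2 * μ),
      mul_le_mul_of_nonneg_right hd (by positivity : 0 ≤ δ ^ 2 * μ)]
  exact ⟨by linarith, by linarith⟩

/-- For states with `μσ ≤ ρ ≤ λσ` (0 < μ < λ) on a d-dimensional space and a grid
with maximal step size δ, the discretisation error of the lower-bound approximation
to `∫_μ^λ (1/s)·tr⁺(sσ − ρ) ds` is at most `2δ²d/μ`; in particular the gap between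
the grid-based upper (piecewise-secant) and lower bounds is at most `2δ²d/μ`. -/
theorem discretisation_gap {d n : ℕ} (ρ σ : Matrix (Fin d) (Fin d) ℂ)
    (hρ : IsState ρ) (hσ : IsState σ) (μ lam δ : ℝ) (hμ : 0 < μ) (hμlt : μ < lam)
    (hlow : (ρ - μ • σ).PosSemidef) (hup : (lam • σ - ρ).PosSemidef)
    (t : Fin (n + 1) → ℝ) (hmono : Monotone t)
    (h0 : t 0 = μ) (hlast : t (Fin.last n) = lam)
    (hδ : ∀ k : Fin n, t k.succ - t k.castSucc ≤ δ) :
    (∫ s in μ..lam, s⁻¹ * trPlus (s • σ - ρ))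
        - (∑ k : Fin n, trPlus (Real.log (t k.castSucc / t k.succ) • ρ
            + (t k.succ - t k.castSucc) • σ))
      ≤ 2 * δ ^ 2 * d / μ
    ∧ (∑ k : Fin n, ∫ s in (t k.castSucc)..(t k.succ), s⁻¹ *
          (((trPlus (t k.succ • σ - ρ) - trPlus (t k.castSucc • σ - ρ))
              / (t k.succ - t k.castSucc)) * (s - t k.castSucc)
            + trPlus (t k.castSucc • σ - ρ)))
        - (∑ k : Fin n, trPlus (Real.log (t k.castSucc / t k.succ) • ρ
            + (t k.succ - t k.castSucc) • σ))
      ≤ 2 * δ ^ 2 * d / μ :=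
  discretisation_gap_general ρ σ hσ μ lam δ hμ t hmono h0 hlast hδ
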